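/- With f̃(x) = 32Λx(Λ+x²)(Λx²+1)/(Λ²+(Λ²+1)x⁴+4Λx²+1)² and j̃(x) = (Λ²−1)²x²/(4Λ(Λ+x²)(Λx²+1)), the integral ∫₀^∞ f̃(x)·j̃(x) dx equals 2(1 − Gd(log Λ)/sinh(log Λ)), where Gd(y) = 2 arctan(e^y) − π/2, for every Λ > 1. -/

import Mathlib

open MeasureTheory

/-- `f̃(x) = 32Λx(Λ+x²)(Λx²+1)/(Λ² + (Λ²+1)x⁴ + 4Λx² + 1)²`. -/
noncomputable def ftil (Λ x : ℝ) : ℝ :=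
  32 * Λ * x * (Λ + x ^ 2) * (Λ * x ^ 2 + 1)
    / (Λ ^ 2 + (Λ ^ 2 + 1) * x ^ 4 + 4 * Λ * x ^ 2 + 1) ^ 2

/-- `j̃(x) = (Λ²−1)²x²/(4Λ(Λ+x²)(Λx²+1))`. -/
noncomputable def jtil (Λ x : ℝ) : ℝ :=
  (Λ ^ 2 - 1) ^ 2 * x ^ 2 / (4 * Λ * (Λ + x ^ 2) * (Λ * x ^ 2 + 1))

/-- The Gudermannian function `Gd(y) = 2 arctan(e^y) − π/2`. -/
noncomputable def Gd (y : ℝ) : ℝ := 2 * Real.arctan (Real.exp y) - Real.pi / 2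

/-!
After cancelling the factor `(Λ + x²)(Λx² + 1)`, the integrand is `8(Λ²−1)²x³/Q(x)²` with
`Q(x) = (Λ²+1)x⁴ + 4Λx² + (Λ²+1)`. As a quadratic in `x²`, `Q` has negative discriminant,
so the integrand has the elementary primitive
`(4Λ/(Λ²−1)) arctan((Λ²−1)/((Λ²+1)x² + 2Λ)) − (4Λx² + 2(Λ²+1))/Q(x)`.
It tends to `0` at `∞` and equals `(2/s) arctan s − 2` at `0`, where `s = (Λ²−1)/(2Λ)` is
`sinh (log Λ)`. Finally `arctan ∘ sinh` is the Gudermannian function.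
-/

open Real Filter Topology Set

noncomputable def mazurDen (Λ x : ℝ) : ℝ :=
  (Λ ^ 2 + 1) * x ^ 4 + 4 * Λ * x ^ 2 + (Λ ^ 2 + 1)

noncomputable def mazurPrimitive (Λ x : ℝ) : ℝ :=
  4 * Λ / (Λ ^ 2 - 1) * arctan ((Λ ^ 2 - 1) / ((Λ ^ 2 + 1) * x ^ 2 + 2 * Λ))
    - (4 * Λ * x ^ 2 + 2 * (Λ ^ 2 + 1)) / mazurDen Λ x

section

variable {Λ : ℝ}

lemma mazurDen_pos (hΛ : 0 ≤ Λ) (x : ℝ) : 0 < mazurDen Λ x := by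
  unfold mazurDen; positivity

lemma ftil_mul_jtil (hΛ : 0 < Λ) (x : ℝ) :
    ftil Λ x * jtil Λ x = 8 * (Λ ^ 2 - 1) ^ 2 * x ^ 3 / mazurDen Λ x ^ 2 := by
  have hQ := mazurDen_pos hΛ.le x
  unfold ftil jtil mazurDen at *
  field_simp
  ring

lemma hasDerivAt_mazurPrimitive (hΛ : 0 < Λ) (hΛ1 : Λ ≠ 1) (x : ℝ) :
    HasDerivAt (mazurPrimitive Λ) (8 * (Λ ^ 2 - 1) ^ 2 * x ^ 3 / mazurDen Λ x ^ 2) x := by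
  have hk : Λ ^ 2 - 1 ≠ 0 :=
    sub_ne_zero.2 fun h => hΛ1 ((pow_eq_one_iff_of_nonneg hΛ.le two_ne_zero).1 h)
  have hg : 0 < (Λ ^ 2 + 1) * x ^ 2 + 2 * Λ := by positivity
  have hQ := mazurDen_pos hΛ.le x
  have hx2 : HasDerivAt (fun y : ℝ => y ^ 2) (2 * x) x := by simpa using hasDerivAt_pow 2 x
  have hx4 : HasDerivAt (fun y : ℝ => y ^ 4) (4 * x ^ 3) x := by simpa using hasDerivAt_pow 4 x
  have hArctan := ((hasDerivAt_const x (Λ ^ 2 - 1)).fun_div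
    ((hx2.const_mul (Λ ^ 2 + 1)).add_const (2 * Λ)) hg.ne').arctan.const_mul
      (4 * Λ / (Λ ^ 2 - 1))
  have hRational := ((hx2.const_mul (4 * Λ)).add_const (2 * (Λ ^ 2 + 1))).fun_div
    (((hx4.const_mul (Λ ^ 2 + 1)).fun_add (hx2.const_mul (4 * Λ))).add_const (Λ ^ 2 + 1))
      hQ.ne'
  unfold mazurPrimitive mazurDen at *
  -- the arctan term differentiates cleanly because
  -- `((Λ²+1)x² + 2Λ)² + (Λ²−1)² = (Λ²+1) Q(x)`
  refine (hArctan.fun_sub hRational).congr_deriv ?_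
  field_simp
  ring

lemma tendsto_mazurPrimitive_atTop (hΛ : 0 ≤ Λ) :
    Tendsto (mazurPrimitive Λ) atTop (𝓝 0) := by
  have hx2 : Tendsto (fun x : ℝ => x ^ 2) atTop atTop := tendsto_pow_atTop two_ne_zero
  have hArctan : Tendsto (fun x => arctan ((Λ ^ 2 - 1) / ((Λ ^ 2 + 1) * x ^ 2 + 2 * Λ)))
      atTop (𝓝 0) := by
    have hg := tendsto_atTop_add_const_right _ (2 * Λ)
      (hx2.const_mul_atTop (by positivity : (0 : ℝ) < Λ ^ 2 + 1))
    simpa only [arctan_zero, Function.comp_def] using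
      (continuous_arctan.tendsto 0).comp (tendsto_const_nhds.div_atTop hg)
  have hRational : Tendsto (fun x => (4 * Λ * x ^ 2 + 2 * (Λ ^ 2 + 1)) / mazurDen Λ x)
      atTop (𝓝 0) := by
    refine tendsto_of_tendsto_of_tendsto_of_le_of_le' tendsto_const_nhds
      (tendsto_const_nhds.div_atTop hx2 : Tendsto (fun x => (2 + 4 * Λ) / x ^ 2) _ _) ?_ ?_
    · exact Eventually.of_forall fun x => div_nonneg (by positivity) (mazurDen_pos hΛ x).le
    · filter_upwards [eventually_gt_atTop 0] with x hx
      rw [div_le_div_iff₀ (mazurDen_pos hΛ x) (by positivity)]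
      unfold mazurDen
      nlinarith [sq_nonneg (x ^ 2 - 1), sq_nonneg Λ, mul_nonneg hΛ (pow_nonneg hx.le 4),
        mul_nonneg (mul_nonneg hΛ (sq_nonneg Λ)) (pow_nonneg hx.le 4)]
  have hsub := (hArctan.const_mul (4 * Λ / (Λ ^ 2 - 1))).sub hRational
  rwa [mul_zero, sub_zero] at hsub

lemma mazurPrimitive_zero (Λ : ℝ) :
    mazurPrimitive Λ 0 = 4 * Λ / (Λ ^ 2 - 1) * arctan ((Λ ^ 2 - 1) / (2 * Λ)) - 2 := by
  have : Λ ^ 2 + 1 ≠ 0 := by positivity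
  simp [mazurPrimitive, mazurDen, this]

end

-- `Gd y = arctan eʸ − arctan e⁻ʸ`, which the addition formula for `arctan` collapses.
lemma Gd_eq_arctan_sinh (y : ℝ) : Gd y = arctan (sinh y) := by
  have hexp := exp_pos y
  have hsum := arctan_add (x := exp y) (y := -(exp y)⁻¹) (by field_simp; norm_num)
  rw [arctan_neg, arctan_inv_of_pos hexp] at hsum
  rw [Gd, sinh_eq, exp_neg]
  convert hsum using 2
  · ring
  · field_simp
    ring

/-- The `m → ∞` Mazur lower bound: for every `Λ > 1`,
`∫₀^∞ f̃(x)·j̃(x) dx = 2(1 − Gd(log Λ)/sinh(log Λ))`. -/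
theorem mazur_integral (Λ : ℝ) (hΛ : 1 < Λ) :
    ∫ x in Set.Ioi (0 : ℝ), ftil Λ x * jtil Λ x
      = 2 * (1 - Gd (Real.log Λ) / Real.sinh (Real.log Λ)) := by
  have hΛ0 : 0 < Λ := by linarith
  have hsinh : sinh (log Λ) = (Λ ^ 2 - 1) / (2 * Λ) := by
    rw [sinh_log hΛ0]
    field_simp
  simp_rw [ftil_mul_jtil hΛ0]
  rw [integral_Ioi_of_hasDerivAt_of_nonneg' (fun x _ => hasDerivAt_mazurPrimitive hΛ0 hΛ.ne' x)
    (fun x (hx : 0 < x) => by positivity) (tendsto_mazurPrimitive_atTop hΛ0.le),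
    mazurPrimitive_zero, Gd_eq_arctan_sinh, hsinh]
  field_simp
  ring
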